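/- arXiv:1909.07222 — 2 statements merged into one kernel-verified Lean document; each statement's English description precedes it below -/
import Mathlib

section
/- K is a perfectoid field: the absolute value on K is nonarchimedean, K is complete, p is topologically nilpotent in K (i.e. |p| < 1), the image |K^×| of the absolute value is dense in ℝ_{>0}, and the p-th power map x ↦ x^p on O_K/pO_K is surjective, i.e. every element of O_K/pO_K admits a p-th root. -/
/-!
The norms `‖p^{1/pⁿ}‖ = p^{-1/pⁿ}` tend to `1`, so the integer powers of these norms are dense
in `ℝ_{>0}`.

For the Frobenius, the elements congruent modulo `p` to the `p`-th power of an integral element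
form a subring `T` of `O_K` (freshman's dream) which is open in `O_K`, closed under inverting
units, and contains every `θ = p^{1/pⁿ}`, as `θ = (p^{1/pⁿ⁺¹})^p`. Every element of `ℤ[θ]` is
`c + θ b` with `c ∈ ℤ` and `b ∈ ℤ[θ]`: it is a unit if `p ∤ c`, and divisible by `θ` otherwise,
because `p = θ^{pⁿ}`. Hence every nonzero element of `ℤ[θ]` is a power of `θ` times a unit, every
integral element of `Frac ℤ[θ]` lies in `T`, and by density so does all of `O_K`.
-/

open Filter Topology IsUltrametricDist

theorem exists_intCast_add_mul_of_mem_closure_singleton {R : Type*} [CommRing R] {θ b : R}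
    (hb : b ∈ Subring.closure {θ}) :
    ∃ c : ℤ, ∃ b' ∈ Subring.closure {θ}, b = c + θ * b' := by
  have hθ : θ ∈ Subring.closure {θ} := Subring.subset_closure (Set.mem_singleton θ)
  induction hb using Subring.closure_induction with
  | mem x hx => exact ⟨0, 1, one_mem _, by simp [Set.mem_singleton_iff.mp hx]⟩
  | zero => exact ⟨0, 0, zero_mem _, by simp⟩
  | one => exact ⟨1, 0, zero_mem _, by simp⟩
  | add x y _ _ hx hy =>
    obtain ⟨c, x', hx', rfl⟩ := hx
    obtain ⟨d, y', hy', rfl⟩ := hy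
    exact ⟨c + d, x' + y', add_mem hx' hy', by push_cast; ring⟩
  | neg x _ hx =>
    obtain ⟨c, x', hx', rfl⟩ := hx
    exact ⟨-c, -x', neg_mem hx', by push_cast; ring⟩
  | mul x y _ _ hx hy =>
    obtain ⟨c, x', hx', rfl⟩ := hx
    obtain ⟨d, y', hy', rfl⟩ := hy
    refine ⟨c * d, c * y' + d * x' + θ * x' * y', ?_, by push_cast; ring⟩
    exact add_mem (add_mem (mul_mem (intCast_mem _ c) hy') (mul_mem (intCast_mem _ d) hx'))
      (mul_mem (mul_mem hθ hx') hy')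

section CompatibleRoots

variable {M : Type*} [Monoid M] {p : ℕ} {r : ℕ → M}

theorem pow_pow_eq_of_forall_succ_pow_eq (hr : ∀ n, r (n + 1) ^ p = r n) (m k : ℕ) :
    r (m + k) ^ p ^ k = r m := by
  induction k with
  | zero => simp
  | succ k ih => rw [← add_assoc, pow_succ', pow_mul, hr, ih]

end CompatibleRoots

section CompatibleRootsRing

variable {R : Type*} [CommRing R] {p : ℕ} {r : ℕ → R}

theorem monotone_closure_singleton_of_forall_succ_pow_eq (hr : ∀ n, r (n + 1) ^ p = r n) :
    Monotone fun n => Subring.closure ({r n} : Set R) := by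
  refine monotone_nat_of_le_succ fun n => Subring.closure_le.mpr ?_
  rw [Set.singleton_subset_iff, SetLike.mem_coe, ← hr n]
  exact pow_mem (Subring.subset_closure (Set.mem_singleton _)) p

theorem exists_mem_closure_singleton_of_mem_closure_range (hr : ∀ n, r (n + 1) ^ p = r n)
    {a b : R} (ha : a ∈ Subring.closure (Set.range r)) (hb : b ∈ Subring.closure (Set.range r)) :
    ∃ n, a ∈ Subring.closure {r n} ∧ b ∈ Subring.closure {r n} := by
  have hmono := monotone_closure_singleton_of_forall_succ_pow_eq hr
  rw [← Set.iUnion_singleton_eq_range, Subring.closure_iUnion,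
    Subring.mem_iSup_of_directed hmono.directed_le] at ha hb
  obtain ⟨i, hi⟩ := ha
  obtain ⟨j, hj⟩ := hb
  exact ⟨max i j, hmono (le_max_left i j) hi, hmono (le_max_right i j) hj⟩

theorem pow_pow_eq_natCast_of_forall_succ_pow_eq (hr0 : r 0 = p) (hr : ∀ n, r (n + 1) ^ p = r n)
    (n : ℕ) : r n ^ p ^ n = p := by
  simpa [hr0] using pow_pow_eq_of_forall_succ_pow_eq hr 0 n

end CompatibleRootsRing

theorem tendsto_nhds_one_of_pow_eq {q : ℕ → ℝ} {N : ℕ → ℕ} {a : ℝ} (ha : 0 < a)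
    (hq : ∀ n, 0 ≤ q n) (hN : Tendsto N atTop atTop) (h : ∀ n, q n ^ N n = a) :
    Tendsto q atTop (𝓝 1) := by
  have hroot : ∀ᶠ n in atTop, a ^ (N n : ℝ)⁻¹ = q n := (hN.eventually_ne_atTop 0).mono
    fun n hn => by rw [← h n, Real.pow_rpow_inv_natCast (hq n) hn]
  have hlim : Tendsto (fun n => a ^ (N n : ℝ)⁻¹) atTop (𝓝 1) := by
    simpa [Function.comp_def] using (Real.continuousAt_const_rpow ha.ne').tendsto.comp
      (tendsto_inv_atTop_zero.comp (tendsto_natCast_atTop_atTop.comp hN))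
  exact hlim.congr' hroot

section NormedField

variable {K : Type*} [NormedField K]

theorem norm_lt_one_of_pow_eq {p N : ℕ} {θ : K} (hN : N ≠ 0) (hθ : θ ^ N = p)
    (hpK : ‖(p : K)‖ < 1) : ‖θ‖ < 1 :=
  (pow_lt_one_iff_of_nonneg (norm_nonneg θ) hN).mp (by rwa [← norm_pow, hθ])

theorem mem_closure_range_norm_units {x : ℕ → K} (hx : ∀ n, 1 < ‖x n‖)
    (hlim : Tendsto (fun n => ‖x n‖) atTop (𝓝 1)) {c : ℝ} (hc : 0 < c) :
    c ∈ closure (Set.range fun u : Kˣ => ‖(u : K)‖) := by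
  refine Metric.mem_closure_iff.mpr fun ε hε => ?_
  obtain ⟨n, hn⟩ :=
    (hlim.eventually (gt_mem_nhds (lt_add_of_pos_right 1 (div_pos hε hc)))).exists
  obtain ⟨m, hm, hm'⟩ := exists_mem_Ico_zpow hc (hx n)
  have hx0 : x n ≠ 0 := norm_pos_iff.mp (one_pos.trans (hx n))
  refine ⟨‖x n‖ ^ m, ⟨Units.mk0 (x n) hx0 ^ m, by simp⟩, ?_⟩
  rw [Real.dist_eq, abs_of_nonneg (sub_nonneg.mpr hm)]
  calc c - ‖x n‖ ^ m < ‖x n‖ ^ (m + 1) - ‖x n‖ ^ m := by linarith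
    _ = ‖x n‖ ^ m * (‖x n‖ - 1) := by rw [zpow_add_one₀ (norm_ne_zero_iff.mpr hx0)]; ring
    _ ≤ c * (‖x n‖ - 1) := mul_le_mul_of_nonneg_right hm (by linarith [hx n])
    _ < c * (ε / c) := mul_lt_mul_of_pos_left (by linarith) hc
    _ = ε := by field_simp

theorem mem_closure_range_norm_units_of_pow_pow_eq {p : ℕ} (hp : 1 < p) {r : ℕ → K}
    (hp0 : 0 < ‖(p : K)‖) (hpK : ‖(p : K)‖ < 1) (hroot : ∀ n, r n ^ p ^ n = p) {c : ℝ}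
    (hc : 0 < c) : c ∈ closure (Set.range fun u : Kˣ => ‖(u : K)‖) := by
  have hr1 : ∀ n, ‖r n‖ < 1 := fun n =>
    norm_lt_one_of_pow_eq (pow_pos (zero_lt_one.trans hp) n).ne' (hroot n) hpK
  have hrpos : ∀ n, 0 < ‖r n‖ := fun n => norm_pos_iff.mpr fun h => by
    simp [h, ← hroot n, (zero_lt_one.trans hp).ne'] at hp0
  refine mem_closure_range_norm_units (x := fun n => (r n)⁻¹)
    (fun n => by simpa using one_lt_inv₀ (hrpos n) |>.mpr (hr1 n)) ?_ hc
  refine tendsto_nhds_one_of_pow_eq (inv_pos.mpr hp0) (fun n => norm_nonneg _)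
    (tendsto_pow_atTop_atTop_of_one_lt hp) fun n => ?_
  rw [← norm_pow, inv_pow, hroot, norm_inv]

variable [IsUltrametricDist K]

variable (K) in
def unitClosedBallSubring : Subring K where
  carrier := {x | ‖x‖ ≤ 1}
  zero_mem' := by simp
  one_mem' := by simp
  mul_mem' {x y} hx hy := by simpa using mul_le_one₀ hx (norm_nonneg y) hy
  add_mem' {x y} hx hy := (norm_add_le_max x y).trans (max_le hx hy)
  neg_mem' {x} hx := by simpa using hx

theorem mem_unitClosedBallSubring {x : K} : x ∈ unitClosedBallSubring K ↔ ‖x‖ ≤ 1 := Iff.rfl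

theorem norm_add_pow_prime_sub_le {p : ℕ} (hp : p.Prime) {x y : K} (hx : ‖x‖ ≤ 1)
    (hy : ‖y‖ ≤ 1) : ‖(x + y) ^ p - (x ^ p + y ^ p)‖ ≤ ‖(p : K)‖ := by
  obtain ⟨c, hc⟩ := exists_add_pow_prime_eq hp
    (⟨x, hx⟩ : unitClosedBallSubring K) ⟨y, hy⟩
  have hc' : (x + y) ^ p - (x ^ p + y ^ p) = p * (x * y * c) := by
    have := congrArg Subtype.val hc
    push_cast at this
    linear_combination this
  rw [hc', norm_mul]
  exact mul_le_of_le_one_right (norm_nonneg _)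
    (mem_unitClosedBallSubring.mp (mul_mem (mul_mem hx hy) c.2))

theorem norm_intCast_eq_one_of_not_dvd {p : ℕ} (hp : p.Prime) (hpK : ‖(p : K)‖ < 1) {c : ℤ}
    (hc : ¬ (p : ℤ) ∣ c) : ‖(c : K)‖ = 1 := by
  obtain ⟨u, v, huv⟩ := (Nat.prime_iff_prime_int.mp hp).coprime_iff_not_dvd.mpr hc
  refine (norm_intCast_le_one K c).antisymm (not_lt.mp fun hlt => ?_)
  have h1 : (1 : K) = u * p + v * c := by exact_mod_cast congrArg (Int.cast : ℤ → K) huv.symm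
  have : ‖(1 : K)‖ < 1 := by
    rw [h1]
    refine (norm_add_le_max _ _).trans_lt (max_lt ?_ ?_) <;> rw [norm_mul]
    · exact (mul_le_of_le_one_left (norm_nonneg _) (norm_intCast_le_one K u)).trans_lt hpK
    · exact (mul_le_of_le_one_left (norm_nonneg _) (norm_intCast_le_one K v)).trans_lt hlt
  simp at this

theorem norm_le_one_of_norm_sub_pow_le {p : ℕ} {x y : K} (hy : ‖y‖ ≤ 1)
    (hxy : ‖x - y ^ p‖ ≤ ‖(p : K)‖) : ‖x‖ ≤ 1 := by
  rw [← sub_add_cancel x (y ^ p)]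
  exact (norm_add_le_max _ _).trans (max_le (hxy.trans (norm_natCast_le_one K p))
    (by simpa using pow_le_one₀ (norm_nonneg y) hy))

variable (K) in
def pthPowersModP (p : ℕ) [Fact p.Prime] : Subring K where
  carrier := {x | ∃ y : K, ‖y‖ ≤ 1 ∧ ‖x - y ^ p‖ ≤ ‖(p : K)‖}
  zero_mem' := ⟨0, by simp [(Fact.out : p.Prime).ne_zero]⟩
  one_mem' := ⟨1, by simp⟩
  add_mem' := by
    rintro x x' ⟨y, hy, hxy⟩ ⟨y', hy', hxy'⟩
    refine ⟨y + y', (norm_add_le_max y y').trans (max_le hy hy'), ?_⟩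
    have : x + x' - (y + y') ^ p
        = (x - y ^ p) + (x' - y' ^ p) + -((y + y') ^ p - (y ^ p + y' ^ p)) := by ring
    rw [this]
    exact (norm_add_le_max _ _).trans (max_le ((norm_add_le_max _ _).trans (max_le hxy hxy'))
      (by rw [norm_neg]; exact norm_add_pow_prime_sub_le Fact.out hy hy'))
  neg_mem' := by
    rintro x ⟨y, hy, hxy⟩
    refine ⟨-y, by simpa using hy, ?_⟩
    -- `(-y) ^ p ≡ -y ^ p` also for `p = 2`: apply the freshman's dream to `-y + y = 0`.
    have hp0 : (-y + y) ^ p = 0 := by simp [(Fact.out : p.Prime).ne_zero]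
    have : -x - (-y) ^ p = -(x - y ^ p) + ((-y + y) ^ p - ((-y) ^ p + y ^ p)) := by
      rw [hp0]; ring
    rw [this]
    exact (norm_add_le_max _ _).trans (max_le (by rwa [norm_neg])
      (norm_add_pow_prime_sub_le Fact.out (by simpa using hy) hy))
  mul_mem' := by
    rintro x x' ⟨y, hy, hxy⟩ ⟨y', hy', hxy'⟩
    refine ⟨y * y', by simpa using mul_le_one₀ hy (norm_nonneg y') hy', ?_⟩
    have : x * x' - (y * y') ^ p = x * (x' - y' ^ p) + y' ^ p * (x - y ^ p) := by ring
    rw [this]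
    refine (norm_add_le_max _ _).trans (max_le ?_ ?_) <;> rw [norm_mul]
    · exact (mul_le_of_le_one_left (norm_nonneg _)
        (norm_le_one_of_norm_sub_pow_le hy hxy)).trans hxy'
    · exact (mul_le_of_le_one_left (norm_nonneg _)
        (by simpa using pow_le_one₀ (norm_nonneg y') hy')).trans hxy

namespace pthPowersModP

variable {p : ℕ} [Fact p.Prime] {x x' : K}

theorem mem_iff : x ∈ pthPowersModP K p ↔ ∃ y : K, ‖y‖ ≤ 1 ∧ ‖x - y ^ p‖ ≤ ‖(p : K)‖ :=
  Iff.rfl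

theorem pow_mem_of_norm_le_one {y : K} (hy : ‖y‖ ≤ 1) : y ^ p ∈ pthPowersModP K p :=
  ⟨y, hy, by simp⟩

theorem mem_of_norm_sub_le (hx : x ∈ pthPowersModP K p) (hx' : ‖x' - x‖ ≤ ‖(p : K)‖) :
    x' ∈ pthPowersModP K p := by
  obtain ⟨y, hy, hxy⟩ := hx
  refine ⟨y, hy, ?_⟩
  rw [← sub_add_sub_cancel x' x]
  exact (norm_add_le_max _ _).trans (max_le hx' hxy)

theorem inv_mem (hpK : ‖(p : K)‖ < 1) (hx : x ∈ pthPowersModP K p) (hx1 : ‖x‖ = 1) :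
    x⁻¹ ∈ pthPowersModP K p := by
  obtain ⟨y, hy, hxy⟩ := hx
  have hyp : ‖y ^ p‖ = 1 := by
    rw [← norm_neg, ← hx1]
    refine (norm_eq_of_add_norm_lt_max ?_).symm
    rw [← sub_eq_add_neg, hx1]
    exact (hxy.trans_lt hpK).trans_le (le_max_left _ _)
  have hx0 : x ≠ 0 := norm_ne_zero_iff.mp (by simp [hx1])
  have hyp0 : y ^ p ≠ 0 := norm_ne_zero_iff.mp (by simp [hyp])
  refine ⟨y⁻¹, ?_, ?_⟩
  · rw [norm_pow, pow_eq_one_iff_of_nonneg (norm_nonneg y) (Fact.out : p.Prime).ne_zero] at hyp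
    simp [hyp]
  · have : x⁻¹ - y⁻¹ ^ p = -(x - y ^ p) * (x⁻¹ * (y ^ p)⁻¹) := by
      rw [inv_pow]
      field_simp
      ring
    rw [this, norm_mul, norm_neg, norm_mul, norm_inv, norm_inv, hx1, hyp]
    simpa using hxy

end pthPowersModP

section RootOfP

variable {p N : ℕ} {θ : K}

theorem norm_le_one_of_mem_closure_singleton (hθ : ‖θ‖ ≤ 1) {b : K}
    (hb : b ∈ Subring.closure {θ}) : ‖b‖ ≤ 1 :=
  (Subring.closure_le (t := unitClosedBallSubring K)).mpr (Set.singleton_subset_iff.mpr hθ) hb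

theorem norm_eq_one_or_exists_eq_mul_of_mem_closure_singleton (hp : p.Prime) (hN : N ≠ 0)
    (hθ : θ ^ N = p) (hpK : ‖(p : K)‖ < 1) {b : K} (hb : b ∈ Subring.closure {θ}) :
    ‖b‖ = 1 ∨ ∃ b' ∈ Subring.closure {θ}, b = θ * b' := by
  have hθ1 := norm_lt_one_of_pow_eq hN hθ hpK
  obtain ⟨c, b', hb', rfl⟩ := exists_intCast_add_mul_of_mem_closure_singleton hb
  by_cases hc : (p : ℤ) ∣ c
  · obtain ⟨e, rfl⟩ := hc
    right
    have hθ' : θ ∈ Subring.closure {θ} := Subring.subset_closure (Set.mem_singleton θ)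
    refine ⟨θ ^ (N - 1) * e + b', add_mem (mul_mem (pow_mem hθ' _) (intCast_mem _ e)) hb', ?_⟩
    have hθN : θ * θ ^ (N - 1) = p := by rw [← pow_succ', Nat.sub_add_cancel (by omega), hθ]
    push_cast
    linear_combination (-(e : K)) * hθN
  · left
    have hc1 := norm_intCast_eq_one_of_not_dvd hp hpK hc
    have hlt : ‖θ * b'‖ < ‖(c : K)‖ := by
      rw [norm_mul, hc1]
      exact (mul_le_of_le_one_right (norm_nonneg θ)
        (norm_le_one_of_mem_closure_singleton hθ1.le hb')).trans_lt hθ1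
    rw [norm_add_eq_max_of_norm_ne_norm hlt.ne', max_eq_left hlt.le, hc1]

theorem exists_eq_pow_mul_of_mem_closure_singleton (hp : p.Prime) (hN : N ≠ 0)
    (hθ : θ ^ N = p) (hpK : ‖(p : K)‖ < 1) {b : K} (hb : b ∈ Subring.closure {θ})
    (hb0 : b ≠ 0) : ∃ m : ℕ, ∃ u ∈ Subring.closure {θ}, ‖u‖ = 1 ∧ b = θ ^ m * u := by
  have hθ1 := norm_lt_one_of_pow_eq hN hθ hpK
  -- Norms on `ℤ[θ]` are at most `1`, so `‖θ‖ ^ m < ‖b‖` bounds the number of factors `θ` in `b`.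
  obtain ⟨m, hm⟩ := exists_pow_lt_of_lt_one (norm_pos_iff.mpr hb0) hθ1
  induction m generalizing b with
  | zero => exact absurd (norm_le_one_of_mem_closure_singleton hθ1.le hb) (by simpa using hm)
  | succ m ih =>
    rcases norm_eq_one_or_exists_eq_mul_of_mem_closure_singleton hp hN hθ hpK hb with
      hb1 | ⟨b', hb', rfl⟩
    · exact ⟨0, b, hb, hb1, by simp⟩
    · have hθ0 : 0 < ‖θ‖ := norm_pos_iff.mpr (left_ne_zero_of_mul hb0)
      rw [pow_succ', norm_mul] at hm
      obtain ⟨k, u, hu, hu1, rfl⟩ :=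
        ih hb' (right_ne_zero_of_mul hb0) (lt_of_mul_lt_mul_left hm hθ0.le)
      exact ⟨k + 1, u, hu, hu1, by ring⟩

theorem exists_div_eq_pow_mul_mul_inv_of_mem_closure_singleton (hp : p.Prime) (hN : N ≠ 0)
    (hθ : θ ^ N = p) (hpK : ‖(p : K)‖ < 1) {a b : K} (ha : a ∈ Subring.closure {θ})
    (hb : b ∈ Subring.closure {θ}) (hab : a / b ≠ 0) (hab1 : ‖a / b‖ ≤ 1) :
    ∃ k : ℕ, ∃ u ∈ Subring.closure {θ}, ∃ v ∈ Subring.closure {θ},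
      ‖u‖ = 1 ∧ ‖v‖ = 1 ∧ a / b = θ ^ k * (u * v⁻¹) := by
  obtain ⟨ha0, hb0⟩ : a ≠ 0 ∧ b ≠ 0 := by simpa [not_or] using hab
  obtain ⟨i, u, hu, hu1, rfl⟩ := exists_eq_pow_mul_of_mem_closure_singleton hp hN hθ hpK ha ha0
  obtain ⟨j, v, hv, hv1, rfl⟩ := exists_eq_pow_mul_of_mem_closure_singleton hp hN hθ hpK hb hb0
  have hji : j ≤ i := by
    rcases Nat.eq_zero_or_pos j with rfl | hj
    · exact Nat.zero_le i
    have hθ0 : 0 < ‖θ‖ := norm_pos_iff.mpr fun h => hb0 (by simp [h, hj.ne'])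
    rw [norm_div, norm_mul, norm_mul, hu1, hv1, mul_one, mul_one, norm_pow, norm_pow,
      div_le_one (pow_pos hθ0 _)] at hab1
    exact (pow_le_pow_iff_right_of_lt_one₀ hθ0 (norm_lt_one_of_pow_eq hN hθ hpK)).mp hab1
  refine ⟨i - j, u, hu, v, hv, hu1, hv1, ?_⟩
  have hθj : θ ^ j ≠ 0 := left_ne_zero_of_mul hb0
  have hv0 : v ≠ 0 := right_ne_zero_of_mul hb0
  rw [← Nat.sub_add_cancel hji, pow_add, Nat.add_sub_cancel]
  field_simp

end RootOfP

section PerfectoidRoots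

variable {p : ℕ} [Fact p.Prime] {r : ℕ → K}

theorem mem_pthPowersModP_of_mem_closure_range (hpK : ‖(p : K)‖ < 1) (hr0 : r 0 = p)
    (hr : ∀ n, r (n + 1) ^ p = r n) {y : K} (hy : y ∈ Subfield.closure (Set.range r))
    (hy1 : ‖y‖ ≤ 1) : y ∈ pthPowersModP K p := by
  have hp : p.Prime := Fact.out
  have hroot := pow_pow_eq_natCast_of_forall_succ_pow_eq hr0 hr
  obtain ⟨a, ha, b, hb, rfl⟩ := Subfield.mem_closure_iff.mp hy
  obtain ⟨n, ha, hb⟩ := exists_mem_closure_singleton_of_mem_closure_range hr ha hb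
  by_cases hab : a / b = 0
  · rw [hab]
    exact zero_mem _
  have hclosure : Subring.closure {r n} ≤ pthPowersModP K p := by
    rw [Subring.closure_le, Set.singleton_subset_iff, SetLike.mem_coe, ← hr n]
    exact pthPowersModP.pow_mem_of_norm_le_one
      (norm_lt_one_of_pow_eq (pow_ne_zero _ hp.ne_zero) (hroot (n + 1)) hpK).le
  obtain ⟨k, u, hu, v, hv, -, hv1, huv⟩ := exists_div_eq_pow_mul_mul_inv_of_mem_closure_singleton
    hp (pow_ne_zero n hp.ne_zero) (hroot n) hpK ha hb hab hy1
  rw [huv]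
  exact mul_mem (pow_mem (hclosure (Subring.subset_closure (Set.mem_singleton _))) k)
    (mul_mem (hclosure hu) (pthPowersModP.inv_mem hpK (hclosure hv) hv1))

theorem mem_pthPowersModP_of_dense (hp0 : 0 < ‖(p : K)‖) (hpK : ‖(p : K)‖ < 1) (hr0 : r 0 = p)
    (hr : ∀ n, r (n + 1) ^ p = r n) (hdense : Dense (Subfield.closure (Set.range r) : Set K))
    {x : K} (hx : ‖x‖ ≤ 1) : x ∈ pthPowersModP K p := by
  obtain ⟨y, hy, hxy⟩ := Metric.mem_closure_iff.mp (hdense x) _ hp0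
  rw [dist_eq_norm] at hxy
  have hy1 : ‖y‖ ≤ 1 := by
    rw [← sub_sub_cancel x y, sub_eq_add_neg]
    exact (norm_add_le_max _ _).trans (max_le hx (by rw [norm_neg]; exact (hxy.trans hpK).le))
  exact pthPowersModP.mem_of_norm_sub_le
    (mem_pthPowersModP_of_mem_closure_range hpK hr0 hr hy hy1) hxy.le

end PerfectoidRoots

end NormedField

/-- Fix a prime `p`.  Let `K` be the completion of `ℚ_p(p^{1/p^n} : n ≥ 0)` with respect to
the unique extension of the `p`-adic absolute value: i.e. `K` is a complete field equipped
with a multiplicative nonarchimedean absolute value `‖·‖` (inducing its topology) with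
`‖p‖ = p⁻¹`, containing a compatible system `r n = p^{1/pⁿ}` of `p`-power roots of `p` which
together generate a dense subfield.

Then `K` is a perfectoid field:
* the absolute value on `K` is nonarchimedean,
* `K` is complete,
* `p` is topologically nilpotent in `K`, i.e. `‖p‖ < 1`,
* the image `|K^×|` of the absolute value is dense in `ℝ_{>0}`, and
* the `p`-th power map on `O_K/pO_K` is surjective: every `x ∈ O_K = {x : ‖x‖ ≤ 1}` is
  congruent modulo `pO_K = {z : ‖z‖ ≤ ‖p‖}` to a `p`-th power of an element of `O_K`. -/
theorem completionOfQpAdjoinPPowerRootsOfP_isPerfectoid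
    (p : ℕ) [Fact p.Prime]
    (K : Type) [NormedField K] [CompleteSpace K]
    (hK_na : ∀ x y : K, ‖x + y‖ ≤ max ‖x‖ ‖y‖)
    (hKp : ‖(p : K)‖ = (p : ℝ)⁻¹)
    (r : ℕ → K) (hr0 : r 0 = (p : K)) (hr : ∀ n, r (n + 1) ^ p = r n)
    (hKdense : Dense (Subfield.closure (Set.range r) : Set K)) :
    (∀ x y : K, ‖x + y‖ ≤ max ‖x‖ ‖y‖) ∧
    CompleteSpace K ∧
    ‖(p : K)‖ < 1 ∧
    (∀ c : ℝ, 0 < c → c ∈ closure (Set.range fun x : Kˣ => ‖(x : K)‖)) ∧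
    (∀ x : K, ‖x‖ ≤ 1 → ∃ y : K, ‖y‖ ≤ 1 ∧ ‖x - y ^ p‖ ≤ ‖(p : K)‖) := by
  have hp : p.Prime := Fact.out
  have : IsUltrametricDist K := isUltrametricDist_of_forall_norm_add_le_max_norm hK_na
  have hp0 : 0 < ‖(p : K)‖ := by
    rw [hKp]
    exact inv_pos.mpr (by exact_mod_cast hp.pos)
  have hpK : ‖(p : K)‖ < 1 := by
    rw [hKp]
    exact inv_lt_one_of_one_lt₀ (by exact_mod_cast hp.one_lt)
  refine ⟨hK_na, inferInstance, hpK, fun c hc => ?_, fun x hx => ?_⟩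
  · exact mem_closure_range_norm_units_of_pow_pow_eq hp.one_lt hp0 hpK
      (pow_pow_eq_natCast_of_forall_succ_pow_eq hr0 hr) hc
  · exact pthPowersModP.mem_iff.mp (mem_pthPowersModP_of_dense hp0 hpK hr0 hr hKdense hx)
end

section
/- Let O be a commutative ring that is p-adically complete and separated, i.e. the canonical map O → lim_n O/p^nO is an isomorphism. Then the projection O → O/pO induces a bijection of multiplicative monoids lim_{x↦x^p} O → lim_{x↦x^p} O/pO, where each inverse limit is taken over the system of copies of the multiplicative monoid indexed by ℕ with all transition maps given by x ↦ x^p. -/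
/-!
The inverse map sends a compatible system `(x̄ₙ)` in `O/p` to `(lim_m x_{n+m} ^ p ^ m)` for
arbitrary lifts `xₖ ∈ O`: since `a ≡ b mod p` implies `a ^ p ^ m ≡ b ^ p ^ m mod p ^ (m + 1)`,
these limits exist, do not depend on the lifts, and are the only compatible lifts of `(x̄ₙ)`.
This Teichmüller construction is Mathlib's `Perfection.quotientMulEquiv`, which needs `O/p`
to have characteristic `p`; in the remaining case `p` is a unit and `O`, being `p`-adically
separated, is zero.
-/

/-- The inverse limit `lim_{x ↦ x^p} M` of a commutative monoid `M` along the `p`-th power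
maps: the multiplicative monoid of sequences `(x₀, x₁, x₂, …)` in `M` with
`x_{n+1} ^ p = x_n` for all `n`, under componentwise multiplication. -/
def powLimitMonoid (M : Type) [CommMonoid M] (p : ℕ) : Submonoid (ℕ → M) where
  carrier := {f : ℕ → M | ∀ n, f (n + 1) ^ p = f n}
  one_mem' := fun n => by simp
  mul_mem' := by
    intro f g hf hg n
    simp only [Pi.mul_apply, mul_pow, hf n, hg n]

/-- The monoid homomorphism `lim_{x ↦ x^p} O → lim_{x ↦ x^p} O/pO` induced componentwise by
the projection `O → O/pO`. -/
def powLimitProjection (O : Type) [CommRing O] (p : ℕ) :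
    powLimitMonoid O p →* powLimitMonoid (O ⧸ Ideal.span {((p : ℕ) : O)}) p where
  toFun f :=
    ⟨fun n => Ideal.Quotient.mk (Ideal.span {((p : ℕ) : O)}) (f.1 n),
      fun n => by rw [← map_pow, f.2 n]⟩
  map_one' := Subtype.ext (funext fun n => map_one _)
  map_mul' f g := Subtype.ext (funext fun n => map_mul _ _ _)

theorem IsHausdorff.subsingleton_of_isUnit {R M : Type*} [CommRing R] [AddCommGroup M]
    [Module R M] {a : R} (h : IsHausdorff (Ideal.span {a}) M) (ha : IsUnit a) : Subsingleton M :=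
  (Ideal.span_singleton_eq_top.2 ha ▸ h).subsingleton

theorem powLimitProjection_bijective_of_subsingleton (O : Type) [CommRing O] [Subsingleton O]
    (p : ℕ) : Function.Bijective (powLimitProjection O p) :=
  ⟨Function.injective_of_subsingleton _, fun _ => ⟨1, Subsingleton.elim _ _⟩⟩

/-- Fix a prime `p`.  Let `O` be a commutative ring that is `p`-adically complete and
separated (the canonical map `O → lim_n O/pⁿO` is an isomorphism, encoded here by
`IsAdicComplete`).  Then the projection `O → O/pO` induces a bijection of multiplicative
monoids `lim_{x ↦ x^p} O → lim_{x ↦ x^p} O/pO`. -/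
theorem powLimitProjection_bijective
    (p : ℕ) [Fact p.Prime]
    (O : Type) [CommRing O]
    (hcomplete : IsAdicComplete (Ideal.span {((p : ℕ) : O)}) O) :
    Function.Bijective (powLimitProjection O p) := by
  by_cases hp : IsUnit (p : O)
  · have := hcomplete.toIsHausdorff.subsingleton_of_isUnit hp
    exact powLimitProjection_bijective_of_subsingleton O p
  · have : CharP (O ⧸ Ideal.span {(p : O)}) p := CharP.quotient O p hp
    -- `powLimitMonoid` is `Perfection.submonoid` and `powLimitProjection` is
    -- `Perfection.mapMonoidHom` of the quotient map, both definitionally.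
    exact (Perfection.quotientMulEquiv p (Ideal.span {(p : O)})).bijective
end
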